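/- Let V₁ and V₃ be 2×2 complex unitary matrices satisfying V₃·V₁·|0⟩⟨0|·V₁†·V₃† = |0⟩⟨0| and V₃·σx·V₁·|0⟩⟨0|·V₁†·σx·V₃† = |0⟩⟨0|, and suppose V₁·|0⟩⟨0|·V₁† = |+⟩⟨+|. Then V₃†·|0⟩⟨0|·V₃ = V₁·|0⟩⟨0|·V₁†, and there exist θ, α ∈ ℝ such that V₃ = e^{iθ}·R_z(α)·V₁†. -/

import Mathlib

open Matrix

noncomputable section

def σx : Matrix (Fin 2) (Fin 2) ℂ := !![0, 1; 1, 0]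

/-- The projector |0⟩⟨0|. -/
def P0 : Matrix (Fin 2) (Fin 2) ℂ := !![1, 0; 0, 0]

/-- The projector |+⟩⟨+|. -/
def Pplus : Matrix (Fin 2) (Fin 2) ℂ := !![1/2, 1/2; 1/2, 1/2]

/-- The rotation matrix about the z-axis: `R_z(θ) = diag(e^{−iθ/2}, e^{iθ/2})`. -/
def Rz (θ : ℝ) : Matrix (Fin 2) (Fin 2) ℂ :=
  !![Complex.exp (-(θ / 2) * Complex.I), 0; 0, Complex.exp ((θ / 2) * Complex.I)]

/-! Conjugation by the unitary `U = V₃ V₁` fixes `|0⟩⟨0|`, so `U` commutes with it and is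
diagonal, with unimodular diagonal entries `e^{iφ}, e^{iψ}`; that is,
`U = e^{i(φ+ψ)/2} R_z(ψ - φ)`, and `V₃ = U V₁†`. The first claim is `h1` conjugated back by `V₃`. -/
lemma commute_of_mul_mul_star_eq {R : Type*} [Monoid R] [StarMul R] {u p : R}
    (hu : u ∈ unitary R) (h : u * p * star u = p) : Commute u p :=
  calc u * p = u * p * (star u * u) := by rw [Unitary.star_mul_self_of_mem hu, mul_one]
    _ = u * p * star u * u := by simp only [mul_assoc]
    _ = p * u := by rw [h]

lemma star_mul_mul_eq_of_mul_mul_star_eq {R : Type*} [Monoid R] [StarMul R] {u p q : R}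
    (hu : u ∈ unitary R) (h : u * p * star u = q) : star u * q * u = p := by
  rw [← h]
  calc star u * (u * p * star u) * u = (star u * u) * p * (star u * u) := by simp only [mul_assoc]
    _ = p := by rw [Unitary.star_mul_self_of_mem hu, one_mul, mul_one]

lemma commute_P0_iff (U : Matrix (Fin 2) (Fin 2) ℂ) :
    Commute U P0 ↔ U 0 1 = 0 ∧ U 1 0 = 0 := by
  rw [Commute, SemiconjBy, ← Matrix.ext_iff]
  simp [Fin.forall_fin_two, Matrix.mul_apply, P0, eq_comm]

lemma norm_diag_eq_one_of_mem_unitaryGroup {U : Matrix (Fin 2) (Fin 2) ℂ}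
    (hU : U ∈ unitaryGroup (Fin 2) ℂ) (h01 : U 0 1 = 0) (h10 : U 1 0 = 0) :
    ‖U 0 0‖ = 1 ∧ ‖U 1 1‖ = 1 := by
  have h := congrArg (fun M : Matrix (Fin 2) (Fin 2) ℂ => (M 0 0, M 1 1)) hU.1
  simpa [Matrix.mul_apply, Fin.sum_univ_two, h01, h10, Complex.conj_mul', ← Complex.ofReal_pow,
    -sq_eq_one_iff, pow_eq_one_iff_of_nonneg] using h

lemma exp_smul_Rz (φ ψ : ℝ) :
    Complex.exp ((((φ + ψ) / 2 : ℝ) : ℂ) * Complex.I) • Rz (ψ - φ) =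
      !![Complex.exp (φ * Complex.I), 0; 0, Complex.exp (ψ * Complex.I)] := by
  ext i j
  fin_cases i <;> fin_cases j <;> simp [Rz, ← Complex.exp_add] <;> ring_nf

lemma exists_eq_exp_smul_Rz_of_commute_P0 {U : Matrix (Fin 2) (Fin 2) ℂ}
    (hU : U ∈ unitaryGroup (Fin 2) ℂ) (hc : Commute U P0) :
    ∃ θ α : ℝ, U = Complex.exp ((θ : ℂ) * Complex.I) • Rz α := by
  obtain ⟨h01, h10⟩ := (commute_P0_iff U).1 hc
  obtain ⟨h00, h11⟩ := norm_diag_eq_one_of_mem_unitaryGroup hU h01 h10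
  obtain ⟨φ, hφ⟩ := (Complex.norm_eq_one_iff _).1 h00
  obtain ⟨ψ, hψ⟩ := (Complex.norm_eq_one_iff _).1 h11
  refine ⟨(φ + ψ) / 2, ψ - φ, ?_⟩
  rw [exp_smul_Rz, hφ, hψ]
  ext i j
  fin_cases i <;> fin_cases j <;> simp [h01, h10]

theorem V3_characterization_general (V₁ V₃ : Matrix (Fin 2) (Fin 2) ℂ)
    (hV₁ : V₁ ∈ Matrix.unitaryGroup (Fin 2) ℂ)
    (hV₃ : V₃ ∈ Matrix.unitaryGroup (Fin 2) ℂ)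
    (h1 : V₃ * V₁ * P0 * V₁ᴴ * V₃ᴴ = P0) :
    V₃ᴴ * P0 * V₃ = V₁ * P0 * V₁ᴴ ∧
    ∃ θ α : ℝ, V₃ = Complex.exp ((θ : ℂ) * Complex.I) • (Rz α * V₁ᴴ) := by
  have hU : V₃ * V₁ ∈ unitaryGroup (Fin 2) ℂ := mul_mem hV₃ hV₁
  have hUP : (V₃ * V₁) * P0 * star (V₃ * V₁) = P0 := by
    simpa only [star_eq_conjTranspose, conjTranspose_mul, mul_assoc] using h1
  have hV₃P : V₃ * (V₁ * P0 * V₁ᴴ) * star V₃ = P0 := by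
    simpa only [star_eq_conjTranspose, mul_assoc] using h1
  refine ⟨star_mul_mul_eq_of_mul_mul_star_eq hV₃ hV₃P, ?_⟩
  obtain ⟨θ, α, hθα⟩ := exists_eq_exp_smul_Rz_of_commute_P0 hU (commute_of_mul_mul_star_eq hU hUP)
  refine ⟨θ, α, ?_⟩
  calc V₃ = V₃ * V₁ * star V₁ := by rw [mul_assoc, Unitary.mul_star_self_of_mem hV₁, mul_one]
    _ = Complex.exp ((θ : ℂ) * Complex.I) • (Rz α * V₁ᴴ) := by
      rw [hθα, smul_mul_assoc, star_eq_conjTranspose]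

theorem V3_characterization (V₁ V₃ : Matrix (Fin 2) (Fin 2) ℂ)
    (hV₁ : V₁ ∈ Matrix.unitaryGroup (Fin 2) ℂ)
    (hV₃ : V₃ ∈ Matrix.unitaryGroup (Fin 2) ℂ)
    (h1 : V₃ * V₁ * P0 * V₁ᴴ * V₃ᴴ = P0)
    (h2 : V₃ * σx * V₁ * P0 * V₁ᴴ * σx * V₃ᴴ = P0)
    (hplus : V₁ * P0 * V₁ᴴ = Pplus) :
    V₃ᴴ * P0 * V₃ = V₁ * P0 * V₁ᴴ ∧
    ∃ θ α : ℝ, V₃ = Complex.exp ((θ : ℂ) * Complex.I) • (Rz α * V₁ᴴ) :=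
  V3_characterization_general V₁ V₃ hV₁ hV₃ h1
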